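/- (Generalized curvature-dimension inequality.) For every ν > 0, every smooth f : G → ℝ, and every x ∈ G: Γ₂(f)(x) + ν · Γ₂^Z(f)(x) ≥ (ρ₂/4) · Γ^Z(f)(x) − (‖ω‖₂²/ν) · Γ(f)(x). (The factor 1/4 accompanies ρ₂ because the antisymmetric part of X_iX_j is ½ f'(x)(0,ω(e_i,e_j)).) -/

import Mathlib

noncomputable section

variable {V C : Type*} [NormedAddCommGroup V] [InnerProductSpace ℝ V] [FiniteDimensional ℝ V]
  [NormedAddCommGroup C] [InnerProductSpace ℝ C] [FiniteDimensional ℝ C]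

/-- The horizontal (left-invariant) derivative on the finite-dimensional
Heisenberg-like group `G = V × 𝐂`: `(X_{v₀} f)(x) = f'(x)(v₀, ½ ω(x₁, v₀))`. -/
def Xd (ω : V →L[ℝ] V →L[ℝ] C) (v₀ : V) (f : V × C → ℝ) : V × C → ℝ :=
  fun x => fderiv ℝ f x (v₀, (1 / 2 : ℝ) • ω x.1 v₀)

/-- The vertical derivative on `G = V × 𝐂`: `(Z_{c₀} f)(x) = f'(x)(0, c₀)`. -/
def Zd (c₀ : C) (f : V × C → ℝ) : V × C → ℝ :=
  fun x => fderiv ℝ f x (0, c₀)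

/-- The sub-Laplacian `L f = Σ_i X_i(X_i f)`. -/
def Ld {n : ℕ} (ω : V →L[ℝ] V →L[ℝ] C) (e : OrthonormalBasis (Fin n) ℝ V)
    (f : V × C → ℝ) : V × C → ℝ :=
  fun x => ∑ i, Xd ω (e i) (Xd ω (e i) f) x

/-- The horizontal carré du champ `Γ(f,g) = Σ_i (X_i f)(X_i g)`. -/
def GammaH {n : ℕ} (ω : V →L[ℝ] V →L[ℝ] C) (e : OrthonormalBasis (Fin n) ℝ V)
    (f g : V × C → ℝ) : V × C → ℝ :=
  fun x => ∑ i, Xd ω (e i) f x * Xd ω (e i) g x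

/-- The vertical carré du champ `Γ^Z(f,g) = Σ_ℓ (Z_ℓ f)(Z_ℓ g)`. -/
def GammaZ {d : ℕ} (fb : OrthonormalBasis (Fin d) ℝ C)
    (f g : V × C → ℝ) : V × C → ℝ :=
  fun x => ∑ ℓ, Zd (fb ℓ) f x * Zd (fb ℓ) g x

/-- `Γ₂(f) = ½(L Γ(f) − 2 Γ(f, Lf))`. -/
def Gamma2H {n : ℕ} (ω : V →L[ℝ] V →L[ℝ] C) (e : OrthonormalBasis (Fin n) ℝ V)
    (f : V × C → ℝ) : V × C → ℝ :=
  fun x => (1 / 2 : ℝ) * (Ld ω e (GammaH ω e f f) x - 2 * GammaH ω e f (Ld ω e f) x)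

/-- `Γ₂^Z(f) = ½(L Γ^Z(f) − 2 Γ^Z(f, Lf))`. -/
def Gamma2Z {n d : ℕ} (ω : V →L[ℝ] V →L[ℝ] C) (e : OrthonormalBasis (Fin n) ℝ V)
    (fb : OrthonormalBasis (Fin d) ℝ C) (f : V × C → ℝ) : V × C → ℝ :=
  fun x => (1 / 2 : ℝ) * (Ld ω e (GammaZ fb f f) x - 2 * GammaZ fb f (Ld ω e f) x)

/-- The vertical derivative `W_{ij} f (x) = f'(x)(0, ω(v₁, v₂))`. -/
def Wd (ω : V →L[ℝ] V →L[ℝ] C) (v₁ v₂ : V) (f : V × C → ℝ) : V × C → ℝ :=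
  fun x => fderiv ℝ f x (0, ω v₁ v₂)

open scoped RealInnerProductSpace


set_option linter.unusedSectionVars false

namespace CD
variable (ω : V →L[ℝ] V →L[ℝ] C)

def tg (x : V × C) (v : V) : V × C := (v, (1/2 : ℝ) • ω x.1 v)

def tgL (v : V) : (V × C) →L[ℝ] (V × C) :=
  (ContinuousLinearMap.inr ℝ V C).comp
    ((1/2 : ℝ) • ((ω.flip v).comp (ContinuousLinearMap.fst ℝ V C)))

lemma tgL_apply (v : V) (h : V × C) : tgL ω v h = (0, (1/2 : ℝ) • ω h.1 v) := rfl

lemma hasFDerivAt_tg (v : V) (x : V × C) :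
    HasFDerivAt (fun y => tg ω y v) (tgL ω v) x := by
  have h : (fun y : V × C => tg ω y v) = fun y => (v, (0 : C)) + tgL ω v y := by
    funext y; simp [tg, tgL_apply, Prod.ext_iff]
  rw [h]
  simpa using ((tgL ω v).hasFDerivAt (x := x)).const_add (v, (0:C))

lemma Xd_eq (v : V) (f : V × C → ℝ) (x : V × C) :
    Xd ω v f x = fderiv ℝ f x (tg ω x v) := rfl

variable {f : V × C → ℝ}

lemma contDiff_fderiv (hf : ContDiff ℝ (⊤:ℕ∞) f) :
    ContDiff ℝ (⊤ : ℕ∞) (fderiv ℝ f) := hf.fderiv_right (le_refl _)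

lemma contDiff_tg (v : V) : ContDiff ℝ (⊤:ℕ∞) (fun y : V × C => tg ω y v) := by
  have h : (fun y : V × C => tg ω y v) = fun y => (v, (0 : C)) + tgL ω v y := by
    funext y; simp [tg, tgL_apply, Prod.ext_iff]
  rw [h]
  exact contDiff_const.add (tgL ω v).contDiff

lemma contDiff_Xd (hf : ContDiff ℝ (⊤:ℕ∞) f) (v : V) :
    ContDiff ℝ (⊤:ℕ∞) (Xd ω v f) :=
  (contDiff_fderiv hf).clm_apply (contDiff_tg ω v)

lemma contDiff_Zd (hf : ContDiff ℝ (⊤:ℕ∞) f) (c : C) :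
    ContDiff ℝ (⊤:ℕ∞) (Zd c f) :=
  (contDiff_fderiv hf).clm_apply contDiff_const

-- second derivative formulas
lemma Xd_Xd (hf : ContDiff ℝ (⊤:ℕ∞) f) (w v : V) (x : V × C) :
    Xd ω w (Xd ω v f) x
      = fderiv ℝ (fderiv ℝ f) x (tg ω x w) (tg ω x v)
        + fderiv ℝ f x (0, (1/2 : ℝ) • ω w v) := by
  have hc : DifferentiableAt ℝ (fderiv ℝ f) x :=
    (contDiff_fderiv hf).differentiable (by simp) x
  have hu : DifferentiableAt ℝ (fun y => tg ω y v) x :=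
    (hasFDerivAt_tg ω v x).differentiableAt
  have : Xd ω w (Xd ω v f) x
      = fderiv ℝ (fun y => fderiv ℝ f y (tg ω y v)) x (tg ω x w) := rfl
  rw [this, fderiv_clm_apply hc hu, (hasFDerivAt_tg ω v x).fderiv]
  simp only [ContinuousLinearMap.add_apply, ContinuousLinearMap.coe_comp', Function.comp_apply,
    ContinuousLinearMap.flip_apply]
  rw [add_comm]
  rfl

lemma Zd_Xd (hf : ContDiff ℝ (⊤:ℕ∞) f) (c : C) (v : V) (x : V × C) :
    Zd c (Xd ω v f) x = fderiv ℝ (fderiv ℝ f) x (0, c) (tg ω x v) := by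
  have hc : DifferentiableAt ℝ (fderiv ℝ f) x :=
    (contDiff_fderiv hf).differentiable (by simp) x
  have hu : DifferentiableAt ℝ (fun y => tg ω y v) x :=
    (hasFDerivAt_tg ω v x).differentiableAt
  have h0 : Zd c (Xd ω v f) x
      = fderiv ℝ (fun y => fderiv ℝ f y (tg ω y v)) x (0, c) := rfl
  rw [h0, fderiv_clm_apply hc hu, (hasFDerivAt_tg ω v x).fderiv]
  simp only [ContinuousLinearMap.add_apply, ContinuousLinearMap.coe_comp', Function.comp_apply,
    ContinuousLinearMap.flip_apply]
  have : tgL ω v ((0:V), c) = 0 := by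
    rw [tgL_apply]; simp
  rw [this, map_zero, zero_add]

lemma Xd_Zd (hf : ContDiff ℝ (⊤:ℕ∞) f) (v : V) (c : C) (x : V × C) :
    Xd ω v (Zd c f) x = fderiv ℝ (fderiv ℝ f) x (tg ω x v) (0, c) := by
  have hc : DifferentiableAt ℝ (fderiv ℝ f) x :=
    (contDiff_fderiv hf).differentiable (by simp) x
  have h0 : Xd ω v (Zd c f) x
      = fderiv ℝ (fun y => fderiv ℝ f y ((0:V), c)) x (tg ω x v) := rfl
  rw [h0, fderiv_clm_apply hc (differentiableAt_const _)]
  simp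

lemma sym (hf : ContDiff ℝ (⊤:ℕ∞) f) (x a b : V × C) :
    fderiv ℝ (fderiv ℝ f) x a b = fderiv ℝ (fderiv ℝ f) x b a :=
  second_derivative_symmetric (fun y => (hf.differentiable (by simp) y).hasFDerivAt)
    (((contDiff_fderiv hf).differentiable (by simp) x).hasFDerivAt) a b

-- commutators
lemma XZ_comm (hf : ContDiff ℝ (⊤:ℕ∞) f) (v : V) (c : C) :
    Xd ω v (Zd c f) = Zd c (Xd ω v f) := by
  funext x
  rw [Xd_Zd ω hf, Zd_Xd ω hf, sym hf]

lemma XX_comm (hskew : ∀ v w : V, ω v w = -ω w v) (hf : ContDiff ℝ (⊤:ℕ∞) f) (w v : V) :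
    Xd ω w (Xd ω v f) = fun x => Xd ω v (Xd ω w f) x + Zd (ω w v) f x := by
  funext x
  rw [Xd_Xd ω hf, Xd_Xd ω hf, sym hf x (tg ω x w) (tg ω x v)]
  have : fderiv ℝ f x (0, (1/2 : ℝ) • ω w v) - fderiv ℝ f x (0, (1/2 : ℝ) • ω v w)
      = Zd (ω w v) f x := by
    rw [← map_sub]
    show fderiv ℝ f x _ = fderiv ℝ f x _
    congr 1
    rw [hskew v w, Prod.mk_sub_mk, sub_zero, smul_neg, sub_neg_eq_add, ← add_smul]
    norm_num
  linarith [this]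

end CD
open scoped RealInnerProductSpace

namespace CD
variable {V C : Type*} [NormedAddCommGroup V] [InnerProductSpace ℝ V] [FiniteDimensional ℝ V]
  [NormedAddCommGroup C] [InnerProductSpace ℝ C] [FiniteDimensional ℝ C]
variable (ω : V →L[ℝ] V →L[ℝ] C)

lemma Xd_mul {g h : V × C → ℝ} (hg : Differentiable ℝ g) (hh : Differentiable ℝ h) (v : V)
    (x : V × C) :
    Xd ω v (fun y => g y * h y) x = Xd ω v g x * h x + g x * Xd ω v h x := by
  show fderiv ℝ (fun y => g y * h y) x _ = _
  rw [fderiv_fun_mul (hg x) (hh x)]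
  simp only [ContinuousLinearMap.add_apply, ContinuousLinearMap.smul_apply, smul_eq_mul]
  show g x * fderiv ℝ h x (tg ω x v) + h x * fderiv ℝ g x (tg ω x v) = _
  rw [Xd_eq, Xd_eq]; ring

lemma Xd_sum {ι : Type*} (s : Finset ι) {g : ι → V × C → ℝ}
    (hg : ∀ i, Differentiable ℝ (g i)) (v : V) (x : V × C) :
    Xd ω v (fun y => ∑ i ∈ s, g i y) x = ∑ i ∈ s, Xd ω v (g i) x := by
  show fderiv ℝ (fun y => ∑ i ∈ s, g i y) x _ = _
  rw [fderiv_fun_sum (fun i _ => (hg i) x)]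
  simp [Xd_eq, tg]

lemma Xd_const_mul {g : V × C → ℝ} (hg : Differentiable ℝ g) (c : ℝ) (v : V) (x : V × C) :
    Xd ω v (fun y => c * g y) x = c * Xd ω v g x := by
  show fderiv ℝ (fun y => c * g y) x _ = _
  rw [fderiv_const_mul (hg x)]
  simp [Xd_eq, tg]

lemma Zd_sum {ι : Type*} (s : Finset ι) {g : ι → V × C → ℝ}
    (hg : ∀ i, Differentiable ℝ (g i)) (c : C) (x : V × C) :
    Zd c (fun y => ∑ i ∈ s, g i y) x = ∑ i ∈ s, Zd c (g i) x := by
  show fderiv ℝ (fun y => ∑ i ∈ s, g i y) x _ = _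
  rw [fderiv_fun_sum (fun i _ => (hg i) x)]
  simp [Zd]

/-- expand a vertical derivative over an orthonormal basis of `C` -/
lemma Zd_expand {d : ℕ} (fb : OrthonormalBasis (Fin d) ℝ C) (c : C) (g : V × C → ℝ)
    (x : V × C) :
    Zd c g x = ∑ ℓ, ⟪c, fb ℓ⟫ * Zd (fb ℓ) g x := by
  show fderiv ℝ g x (0, c) = _
  have h2 : ∑ ℓ, ⟪c, fb ℓ⟫ • fb ℓ = c := by
    refine Eq.trans (Finset.sum_congr rfl fun ℓ _ => ?_) (fb.sum_repr' c)
    rw [real_inner_comm]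
  have hc : ((0 : V), c) = ∑ ℓ, ⟪c, fb ℓ⟫ • ((0 : V), fb ℓ) := by
    apply Prod.ext
    · simp [Prod.fst_sum]
    · simp only [Prod.snd_sum, Prod.smul_mk, smul_zero]
      exact h2.symm
  rw [hc, map_sum]
  congr 1
  funext ℓ
  rw [map_smul]
  rfl

end CD

namespace CD
variable (ω : V →L[ℝ] V →L[ℝ] C)

/-- shorthand: smooth implies differentiable -/
lemma dOf {g : V × C → ℝ} (h : ContDiff ℝ (⊤:ℕ∞) g) : Differentiable ℝ g :=
  h.differentiable (by simp)

lemma Xd_add {g h : V × C → ℝ} (hg : Differentiable ℝ g) (hh : Differentiable ℝ h) (v : V)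
    (x : V × C) :
    Xd ω v (fun y => g y + h y) x = Xd ω v g x + Xd ω v h x := by
  show fderiv ℝ (fun y => g y + h y) x _ = _
  rw [fderiv_fun_add (hg x) (hh x)]
  rfl

/-- `X_v` applied to a sum of `2 * (gᵢ · hᵢ)`. -/
lemma Xd_sum2 {ι : Type*} [Fintype ι] (v : V) {g h : ι → V × C → ℝ}
    (hg : ∀ i, ContDiff ℝ (⊤:ℕ∞) (g i)) (hh : ∀ i, ContDiff ℝ (⊤:ℕ∞) (h i)) (x : V × C) :
    Xd ω v (fun y => ∑ i, (2:ℝ) * (g i y * h i y)) x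
      = ∑ i, (2:ℝ) * (Xd ω v (g i) x * h i x + g i x * Xd ω v (h i) x) := by
  rw [Xd_sum ω Finset.univ
      (fun i => ((dOf (hg i)).fun_mul (dOf (hh i))).const_mul 2) v x]
  refine Finset.sum_congr rfl fun i _ => ?_
  rw [Xd_const_mul ω ((dOf (hg i)).fun_mul (dOf (hh i))), Xd_mul ω (dOf (hg i)) (dOf (hh i))]

variable {n d : ℕ} (e : OrthonormalBasis (Fin n) ℝ V) (fb : OrthonormalBasis (Fin d) ℝ C)
variable {f : V × C → ℝ}

lemma Gamma2Z_eq (hf : ContDiff ℝ (⊤:ℕ∞) f) (x : V × C) :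
    Gamma2Z ω e fb f x = ∑ j, ∑ ℓ, (Xd ω (e j) (Zd (fb ℓ) f) x)^2 := by
  set G : Fin d → V × C → ℝ := fun ℓ => Zd (fb ℓ) f with hGdef
  have hG : ∀ ℓ, ContDiff ℝ (⊤:ℕ∞) (G ℓ) := fun ℓ => contDiff_Zd hf (fb ℓ)
  have hXG : ∀ j ℓ, ContDiff ℝ (⊤:ℕ∞) (Xd ω (e j) (G ℓ)) :=
    fun j ℓ => contDiff_Xd ω (hG ℓ) (e j)
  -- step 1 : first derivative of GammaZ f f
  have step1 : ∀ j, Xd ω (e j) (GammaZ fb f f)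
      = fun y => ∑ ℓ, (2:ℝ) * (G ℓ y * Xd ω (e j) (G ℓ) y) := by
    intro j; funext y
    have h1 : Xd ω (e j) (GammaZ fb f f) y
        = ∑ ℓ, Xd ω (e j) (fun z => G ℓ z * G ℓ z) y :=
      Xd_sum ω Finset.univ (fun ℓ => (dOf (hG ℓ)).mul (dOf (hG ℓ))) (e j) y
    rw [h1]
    refine Finset.sum_congr rfl fun ℓ _ => ?_
    rw [Xd_mul ω (dOf (hG ℓ)) (dOf (hG ℓ))]; ring
  -- step 2 : Ld of GammaZ f f
  have step2 : Ld ω e (GammaZ fb f f) x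
      = ∑ j, ∑ ℓ, (2:ℝ) * ((Xd ω (e j) (G ℓ) x)^2 + G ℓ x * Xd ω (e j) (Xd ω (e j) (G ℓ)) x) := by
    show ∑ j, Xd ω (e j) (Xd ω (e j) (GammaZ fb f f)) x = _
    refine Finset.sum_congr rfl fun j _ => ?_
    rw [step1 j, Xd_sum2 ω (e j) hG (fun ℓ => hXG j ℓ) x]
    refine Finset.sum_congr rfl fun ℓ _ => ?_
    ring
  -- step 3 : GammaZ f (Ld f)
  have step3 : GammaZ fb f (Ld ω e f) x
      = ∑ ℓ, G ℓ x * ∑ j, Xd ω (e j) (Xd ω (e j) (G ℓ)) x := by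
    show ∑ ℓ, G ℓ x * Zd (fb ℓ) (Ld ω e f) x = _
    refine Finset.sum_congr rfl fun ℓ _ => ?_
    congr 1
    have h1 : Zd (fb ℓ) (Ld ω e f) x
        = ∑ j, Zd (fb ℓ) (Xd ω (e j) (Xd ω (e j) f)) x :=
      Zd_sum Finset.univ
        (fun j => dOf (contDiff_Xd ω (contDiff_Xd ω hf (e j)) (e j))) (fb ℓ) x
    rw [h1]
    refine Finset.sum_congr rfl fun j _ => ?_
    rw [← XZ_comm ω (contDiff_Xd ω hf (e j)) (e j) (fb ℓ),
        XZ_comm ω hf (e j) (fb ℓ)]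
  show (1 / 2 : ℝ) * (Ld ω e (GammaZ fb f f) x - 2 * GammaZ fb f (Ld ω e f) x) = _
  rw [step2, step3]
  have key : ∑ ℓ, G ℓ x * ∑ j, Xd ω (e j) (Xd ω (e j) (G ℓ)) x
      = ∑ j, ∑ ℓ, G ℓ x * Xd ω (e j) (Xd ω (e j) (G ℓ)) x := by
    rw [Finset.sum_comm]
    exact Finset.sum_congr rfl fun ℓ _ => Finset.mul_sum _ _ _
  rw [key, Finset.mul_sum, ← Finset.sum_sub_distrib, Finset.mul_sum]
  refine Finset.sum_congr rfl fun j _ => ?_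
  rw [Finset.mul_sum _ _ (2:ℝ), ← Finset.sum_sub_distrib, Finset.mul_sum]
  refine Finset.sum_congr rfl fun ℓ _ => ?_
  ring


lemma Gamma2H_eq (hskew : ∀ v w : V, ω v w = -ω w v) (hf : ContDiff ℝ (⊤:ℕ∞) f) (x : V × C) :
    Gamma2H ω e f x = (∑ j, ∑ i, (Xd ω (e j) (Xd ω (e i) f) x)^2)
      + 2 * ∑ j, ∑ i, Xd ω (e i) f x * Zd (ω (e j) (e i)) (Xd ω (e j) f) x := by
  set F : Fin n → V × C → ℝ := fun i => Xd ω (e i) f with hFdef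
  have hF : ∀ i, ContDiff ℝ (⊤:ℕ∞) (F i) := fun i => contDiff_Xd ω hf (e i)
  have hXF : ∀ j i, ContDiff ℝ (⊤:ℕ∞) (Xd ω (e j) (F i)) :=
    fun j i => contDiff_Xd ω (hF i) (e j)
  -- step 1 : first derivative of GammaH f f
  have step1 : ∀ j, Xd ω (e j) (GammaH ω e f f)
      = fun y => ∑ i, (2:ℝ) * (F i y * Xd ω (e j) (F i) y) := by
    intro j; funext y
    have h1 : Xd ω (e j) (GammaH ω e f f) y
        = ∑ i, Xd ω (e j) (fun z => F i z * F i z) y :=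
      Xd_sum ω Finset.univ (fun i => (dOf (hF i)).mul (dOf (hF i))) (e j) y
    rw [h1]
    refine Finset.sum_congr rfl fun i _ => ?_
    rw [Xd_mul ω (dOf (hF i)) (dOf (hF i))]; ring
  -- step 2 : Ld of GammaH f f
  have step2 : Ld ω e (GammaH ω e f f) x
      = ∑ j, ∑ i, (2:ℝ) * ((Xd ω (e j) (F i) x)^2 + F i x * Xd ω (e j) (Xd ω (e j) (F i)) x) := by
    show ∑ j, Xd ω (e j) (Xd ω (e j) (GammaH ω e f f)) x = _
    refine Finset.sum_congr rfl fun j _ => ?_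
    rw [step1 j, Xd_sum2 ω (e j) hF (fun i => hXF j i) x]
    refine Finset.sum_congr rfl fun i _ => ?_
    ring
  -- step 3 : GammaH f (Ld f)
  have step3 : GammaH ω e f (Ld ω e f) x
      = ∑ i, F i x * ∑ j, Xd ω (e i) (Xd ω (e j) (F j)) x := by
    show ∑ i, F i x * Xd ω (e i) (Ld ω e f) x = _
    refine Finset.sum_congr rfl fun i _ => ?_
    congr 1
    exact Xd_sum ω Finset.univ (fun j => dOf (hXF j j)) (e i) x
  -- commutator computation : XjXjFi − XiXjFj = 2 Zd (ω ej ei) Fj at x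
  have comm : ∀ j i, Xd ω (e j) (Xd ω (e j) (F i)) x
      = Xd ω (e i) (Xd ω (e j) (F j)) x + 2 * Zd (ω (e j) (e i)) (F j) x := by
    intro j i
    have c1 : Xd ω (e j) (F i) = fun y => Xd ω (e i) (F j) y + Zd (ω (e j) (e i)) f y :=
      XX_comm ω hskew hf (e j) (e i)
    have c2 : Xd ω (e j) (Xd ω (e j) (F i)) x
        = Xd ω (e j) (Xd ω (e i) (F j)) x + Xd ω (e j) (Zd (ω (e j) (e i)) f) x := by
      rw [c1]
      exact Xd_add ω (dOf (contDiff_Xd ω (hF j) (e i))) (dOf (contDiff_Zd hf _)) (e j) x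
    have c3 : Xd ω (e j) (Xd ω (e i) (F j)) x
        = Xd ω (e i) (Xd ω (e j) (F j)) x + Zd (ω (e j) (e i)) (F j) x := by
      have := XX_comm ω hskew (hF j) (e j) (e i)
      rw [this]
    have c4 : Xd ω (e j) (Zd (ω (e j) (e i)) f) x = Zd (ω (e j) (e i)) (F j) x := by
      rw [XZ_comm ω hf (e j) (ω (e j) (e i))]
    rw [c2, c3, c4]; ring
  show (1 / 2 : ℝ) * (Ld ω e (GammaH ω e f f) x - 2 * GammaH ω e f (Ld ω e f) x) = _
  rw [step2, step3]
  have key : ∑ i, F i x * ∑ j, Xd ω (e i) (Xd ω (e j) (F j)) x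
      = ∑ j, ∑ i, F i x * Xd ω (e i) (Xd ω (e j) (F j)) x := by
    rw [Finset.sum_comm]
    exact Finset.sum_congr rfl fun i _ => Finset.mul_sum _ _ _
  rw [key]
  simp only [Finset.mul_sum, ← Finset.sum_sub_distrib, ← Finset.sum_add_distrib]
  refine Finset.sum_congr rfl fun j _ => ?_
  refine Finset.sum_congr rfl fun i _ => ?_
  rw [comm j i]
  ring

end CD

open CD

/-- The generalized curvature-dimension inequality on the finite-dimensional
Heisenberg-like group `G = V × 𝐂`: for every `ν > 0` and smooth `f`,
`Γ₂(f) + ν Γ₂^Z(f) ≥ (ρ₂/4) Γ^Z(f) − (‖ω‖₂²/ν) Γ(f)`. -/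
theorem generalized_curvature_dimension {n d : ℕ}
    (ω : V →L[ℝ] V →L[ℝ] C) (hskew : ∀ v w : V, ω v w = -ω w v)
    (e : OrthonormalBasis (Fin n) ℝ V) (fb : OrthonormalBasis (Fin d) ℝ C)
    (ν : ℝ) (hν : 0 < ν)
    (f : V × C → ℝ) (hf : ContDiff ℝ (⊤ : ℕ∞) f) (x : V × C) :
    Gamma2H ω e f x + ν * Gamma2Z ω e fb f x
      ≥ (sInf {r : ℝ | ∃ z : C, ‖z‖ = 1 ∧
            r = ∑ i, ∑ j, (⟪ω (e i) (e j), z⟫) ^ 2} / 4) * GammaZ fb f f x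
        - ((∑ i, ∑ j, ‖ω (e i) (e j)‖ ^ 2) / ν) * GammaH ω e f f x := by
  have hf' : ContDiff ℝ (⊤:ℕ∞) f := hf.of_le (by simp)
  set ρ : ℝ := sInf {r : ℝ | ∃ z : C, ‖z‖ = 1 ∧
      r = ∑ i, ∑ j, (⟪ω (e i) (e j), z⟫) ^ 2} with hρdef
  set a : Fin n → ℝ := fun i => Xd ω (e i) f x with ha
  set b : Fin d → ℝ := fun ℓ => Zd (fb ℓ) f x with hb
  set M : Fin n → Fin d → ℝ := fun j ℓ => Xd ω (e j) (Zd (fb ℓ) f) x with hM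
  set S : Fin n → Fin n → ℝ :=
    fun i j => fderiv ℝ (fderiv ℝ f) x (tg ω x (e i)) (tg ω x (e j)) with hS
  set w : Fin n → Fin n → ℝ := fun i j => fderiv ℝ f x ((0:V), ω (e i) (e j)) with hw
  set q : Fin n → Fin n → Fin d → ℝ := fun i j ℓ => ⟪ω (e i) (e j), fb ℓ⟫ with hq
  -- basic facts
  have hSsym : ∀ i j, S i j = S j i := fun i j => sym hf' x _ _
  have hwanti : ∀ i j, w j i = - w i j := by
    intro i j
    show fderiv ℝ f x ((0:V), ω (e j) (e i)) = - fderiv ℝ f x ((0:V), ω (e i) (e j))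
    rw [← map_neg]
    congr 1
    rw [hskew (e j) (e i)]
    exact Prod.ext (neg_zero).symm rfl
  have hwq : ∀ i j, w i j = ∑ ℓ, q i j ℓ * b ℓ := fun i j =>
    Zd_expand fb (ω (e i) (e j)) f x
  -- decomposition of the horizontal second derivatives
  have hXX : ∀ j i, Xd ω (e j) (Xd ω (e i) f) x = S i j + (1/2 : ℝ) * w j i := by
    intro j i
    rw [Xd_Xd ω hf' (e j) (e i) x, hSsym i j]
    congr 1
    have h2 : ((0:V), (1/2:ℝ) • ω (e j) (e i)) = (1/2:ℝ) • ((0:V), ω (e j) (e i)) := by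
      exact Prod.ext (smul_zero _).symm rfl
    rw [h2, map_smul]
    rfl
  -- the vertical mixed derivatives in Gamma2H
  have hZX : ∀ j i, Zd (ω (e j) (e i)) (Xd ω (e j) f) x = ∑ ℓ, q j i ℓ * M j ℓ := by
    intro j i
    rw [Zd_expand fb (ω (e j) (e i)) (Xd ω (e j) f) x]
    refine Finset.sum_congr rfl fun ℓ _ => ?_
    congr 1
    rw [← XZ_comm ω hf' (e j) (fb ℓ)]
  -- formulas for the two Gamma₂
  have hG2Z : Gamma2Z ω e fb f x = ∑ j, ∑ ℓ, (M j ℓ)^2 := Gamma2Z_eq ω e fb hf' x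
  have hG2H : Gamma2H ω e f x = (∑ j, ∑ i, (S i j + (1/2:ℝ) * w j i)^2)
      + 2 * ∑ j, ∑ i, a i * ∑ ℓ, q j i ℓ * M j ℓ := by
    rw [Gamma2H_eq ω e hskew hf' x]
    have t1 : (∑ j, ∑ i, (Xd ω (e j) (Xd ω (e i) f) x)^2)
        = ∑ j, ∑ i, (S i j + (1/2:ℝ) * w j i)^2 :=
      Finset.sum_congr rfl fun j _ => Finset.sum_congr rfl fun i _ => by rw [hXX j i]
    have t2 : (∑ j, ∑ i, Xd ω (e i) f x * Zd (ω (e j) (e i)) (Xd ω (e j) f) x)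
        = ∑ j, ∑ i, a i * ∑ ℓ, q j i ℓ * M j ℓ :=
      Finset.sum_congr rfl fun j _ => Finset.sum_congr rfl fun i _ => by rw [hZX j i]
    rw [t1, t2]
  -- Part A : the symmetric/antisymmetric square expansion
  have hcross : (∑ j, ∑ i, S i j * w j i) = 0 := by
    have h1 : (∑ j, ∑ i, S i j * w j i) = ∑ j, ∑ i, S j i * w i j := Finset.sum_comm
    have h2 : (∑ j, ∑ i, S j i * w i j) = - ∑ j, ∑ i, S i j * w j i := by
      rw [← Finset.sum_neg_distrib]
      refine Finset.sum_congr rfl fun j _ => ?_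
      rw [← Finset.sum_neg_distrib]
      refine Finset.sum_congr rfl fun i _ => ?_
      rw [hSsym j i, hwanti j i]
      ring
    linarith [h1.trans h2]
  have hA : (∑ j, ∑ i, (S i j + (1/2:ℝ) * w j i)^2)
      ≥ (1/4 : ℝ) * ∑ i, ∑ j, (w i j)^2 := by
    have expand : (∑ j, ∑ i, (S i j + (1/2:ℝ) * w j i)^2)
        = (∑ j, ∑ i, (S i j)^2) + (∑ j, ∑ i, S i j * w j i)
          + (1/4:ℝ) * ∑ j, ∑ i, (w j i)^2 := by
      simp only [Finset.mul_sum, ← Finset.sum_add_distrib]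
      refine Finset.sum_congr rfl fun j _ => ?_
      refine Finset.sum_congr rfl fun i _ => ?_
      ring
    have hswap : (∑ j, ∑ i, (w j i)^2) = ∑ i, ∑ j, (w i j)^2 := rfl
    have hs2 : (0:ℝ) ≤ ∑ j, ∑ i, (S i j)^2 :=
      Finset.sum_nonneg fun j _ => Finset.sum_nonneg fun i _ => sq_nonneg _
    rw [expand, hcross, hswap]
    linarith
  -- Part W : the ρ₂ bound
  have hW : ρ * (∑ ℓ, (b ℓ)^2) ≤ ∑ i, ∑ j, (w i j)^2 := by
    rcases eq_or_ne (∑ ℓ, (b ℓ)^2) 0 with h0 | h0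
    · rw [h0, mul_zero]
      exact Finset.sum_nonneg fun i _ => Finset.sum_nonneg fun j _ => sq_nonneg _
    · set bv : C := ∑ ℓ, b ℓ • fb ℓ with hbv
      have hinner : ∀ ℓ, ⟪fb ℓ, bv⟫ = b ℓ := fun ℓ =>
        fb.orthonormal.inner_right_fintype b ℓ
      have hnormsq : ‖bv‖^2 = ∑ ℓ, (b ℓ)^2 := by
        rw [← real_inner_self_eq_norm_sq, hbv, sum_inner]
        refine Finset.sum_congr rfl fun ℓ _ => ?_
        rw [real_inner_smul_left, hinner ℓ]
        ring
      have hbvne : bv ≠ 0 := by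
        intro hz
        apply h0
        rw [← hnormsq, hz]
        simp
      set z : C := ‖bv‖⁻¹ • bv with hz
      have hz1 : ‖z‖ = 1 := norm_smul_inv_norm hbvne
      have hbvz : bv = ‖bv‖ • z := by
        rw [hz, smul_smul, mul_inv_cancel₀ (norm_ne_zero_iff.mpr hbvne), one_smul]
      have hwbv : ∀ i j, w i j = ⟪ω (e i) (e j), bv⟫ := by
        intro i j
        rw [hwq i j, hbv, inner_sum]
        refine Finset.sum_congr rfl fun ℓ _ => ?_
        rw [real_inner_smul_right]
        ring
      have hmem : (∑ i, ∑ j, (⟪ω (e i) (e j), z⟫)^2) ∈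
          {r : ℝ | ∃ z : C, ‖z‖ = 1 ∧ r = ∑ i, ∑ j, (⟪ω (e i) (e j), z⟫) ^ 2} :=
        ⟨z, hz1, rfl⟩
      have hbdd : BddBelow {r : ℝ | ∃ z : C, ‖z‖ = 1 ∧
          r = ∑ i, ∑ j, (⟪ω (e i) (e j), z⟫) ^ 2} := by
        refine ⟨0, fun r hr => ?_⟩
        obtain ⟨z', -, rfl⟩ := hr
        exact Finset.sum_nonneg fun i _ => Finset.sum_nonneg fun j _ => sq_nonneg _
      have hle : ρ ≤ ∑ i, ∑ j, (⟪ω (e i) (e j), z⟫)^2 := csInf_le hbdd hmem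
      have hwz : ∀ i j, (w i j)^2 = ‖bv‖^2 * (⟪ω (e i) (e j), z⟫)^2 := by
        intro i j
        have hh : ⟪ω (e i) (e j), bv⟫ = ‖bv‖ * ⟪ω (e i) (e j), z⟫ := by
          conv_lhs => rw [hbvz]
          rw [real_inner_smul_right]
        rw [hwbv i j, hh]
        ring
      have hsum : (∑ i, ∑ j, (w i j)^2)
          = ‖bv‖^2 * ∑ i, ∑ j, (⟪ω (e i) (e j), z⟫)^2 := by
        simp only [Finset.mul_sum]
        exact Finset.sum_congr rfl fun i _ => Finset.sum_congr rfl fun j _ => hwz i j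
      rw [hsum, ← hnormsq]
      have hn2 : (0:ℝ) ≤ ‖bv‖^2 := sq_nonneg _
      nlinarith [hle, hn2]
  -- Part B : the cross term with ν
  set c : Fin n → Fin d → ℝ := fun j ℓ => ∑ i, a i * q j i ℓ with hc
  have hTsum : (∑ j, ∑ i, a i * ∑ ℓ, q j i ℓ * M j ℓ)
      = ∑ j, ∑ ℓ, c j ℓ * M j ℓ := by
    refine Finset.sum_congr rfl fun j _ => ?_
    simp only [Finset.mul_sum]
    rw [Finset.sum_comm]
    simp only [hc, Finset.sum_mul]
    refine Finset.sum_congr rfl fun ℓ _ => Finset.sum_congr rfl fun i _ => ?_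
    ring
  have hB : ∀ j ℓ, -((1/ν) * (c j ℓ)^2) ≤ 2 * (c j ℓ * M j ℓ) + ν * (M j ℓ)^2 := by
    intro j ℓ
    have h1 : (0:ℝ) ≤ (ν * M j ℓ + c j ℓ)^2 / ν := div_nonneg (sq_nonneg _) hν.le
    have h2 : (ν * M j ℓ + c j ℓ)^2 / ν
        = ν * (M j ℓ)^2 + 2 * (c j ℓ * M j ℓ) + (1/ν) * (c j ℓ)^2 := by
      field_simp
      ring
    linarith [h2 ▸ h1]
  have hBsum : -((1/ν) * ∑ j, ∑ ℓ, (c j ℓ)^2)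
      ≤ 2 * (∑ j, ∑ ℓ, c j ℓ * M j ℓ) + ν * ∑ j, ∑ ℓ, (M j ℓ)^2 := by
    have pos : (0:ℝ) ≤ ∑ j, ∑ ℓ,
        (2 * (c j ℓ * M j ℓ) + ν * (M j ℓ)^2 + (1/ν) * (c j ℓ)^2) :=
      Finset.sum_nonneg fun j _ => Finset.sum_nonneg fun ℓ _ => by
        have := hB j ℓ; linarith
    have expand : (∑ j, ∑ ℓ,
        (2 * (c j ℓ * M j ℓ) + ν * (M j ℓ)^2 + (1/ν) * (c j ℓ)^2))
        = 2 * (∑ j, ∑ ℓ, c j ℓ * M j ℓ) + ν * (∑ j, ∑ ℓ, (M j ℓ)^2)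
          + (1/ν) * ∑ j, ∑ ℓ, (c j ℓ)^2 := by
      simp only [Finset.mul_sum, ← Finset.sum_add_distrib]
    rw [expand] at pos
    linarith
  -- Part C : Cauchy–Schwarz
  have hParseval : ∀ i j, (∑ ℓ, (q i j ℓ)^2) = ‖ω (e i) (e j)‖^2 := by
    intro i j
    have h1 := fb.sum_inner_mul_inner (ω (e i) (e j)) (ω (e i) (e j))
    rw [real_inner_self_eq_norm_sq] at h1
    rw [← h1]
    exact Finset.sum_congr rfl fun ℓ _ => by
      simp only [hq, sq]
      rw [real_inner_comm (fb ℓ)]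
  have hC : (∑ j, ∑ ℓ, (c j ℓ)^2)
      ≤ (∑ i, (a i)^2) * ∑ i, ∑ j, ‖ω (e i) (e j)‖^2 := by
    have step : ∀ j ℓ, (c j ℓ)^2 ≤ (∑ i, (a i)^2) * ∑ i, (q j i ℓ)^2 := by
      intro j ℓ
      exact Finset.sum_mul_sq_le_sq_mul_sq _ _ _
    calc (∑ j, ∑ ℓ, (c j ℓ)^2)
        ≤ ∑ j, ∑ ℓ, (∑ i, (a i)^2) * ∑ i, (q j i ℓ)^2 :=
          Finset.sum_le_sum fun j _ => Finset.sum_le_sum fun ℓ _ => step j ℓ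
      _ = (∑ i, (a i)^2) * ∑ j, ∑ i, ∑ ℓ, (q j i ℓ)^2 := by
          simp only [Finset.mul_sum]
          refine Finset.sum_congr rfl fun j _ => ?_
          rw [Finset.sum_comm]
      _ = (∑ i, (a i)^2) * ∑ j, ∑ i, ‖ω (e j) (e i)‖^2 := by
          congr 1
          exact Finset.sum_congr rfl fun j _ => Finset.sum_congr rfl fun i _ =>
            hParseval j i
      _ = (∑ i, (a i)^2) * ∑ i, ∑ j, ‖ω (e i) (e j)‖^2 := rfl
  -- assemble everything
  have hGZ : GammaZ fb f f x = ∑ ℓ, (b ℓ)^2 := by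
    show (∑ ℓ, Zd (fb ℓ) f x * Zd (fb ℓ) f x) = _
    exact Finset.sum_congr rfl fun ℓ _ => (sq _).symm
  have hGH : GammaH ω e f f x = ∑ i, (a i)^2 := by
    show (∑ i, Xd ω (e i) f x * Xd ω (e i) f x) = _
    exact Finset.sum_congr rfl fun i _ => (sq _).symm
  rw [ge_iff_le, hGZ, hGH, hG2H, hG2Z, hTsum]
  have hfinal : -((1/ν) * ∑ j, ∑ ℓ, (c j ℓ)^2)
      ≥ -((1/ν) * ((∑ i, (a i)^2) * ∑ i, ∑ j, ‖ω (e i) (e j)‖^2)) := by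
    have hν' : (0:ℝ) ≤ 1/ν := by positivity
    nlinarith [mul_le_mul_of_nonneg_left hC hν']
  have hdiv : ((∑ i, ∑ j, ‖ω (e i) (e j)‖ ^ 2) / ν) * (∑ i, (a i)^2)
      = (1/ν) * ((∑ i, (a i)^2) * ∑ i, ∑ j, ‖ω (e i) (e j)‖^2) := by
    ring
  linarith [hA, hW, hBsum, hfinal]
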